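/- arXiv:2007.06881 — 3 statements merged into one kernel-verified Lean document; each statement's English description precedes it below -/
import Mathlib

section
/- Associativity of middle product with polynomial multiplication: for integers d, k, n > 0 and polynomials r ∈ R^{<k+1}[x], a ∈ R^{<n}[x], s ∈ R^{<n+d+k-1}[x] over a commutative ring R, it holds that r ⊙_d (a ⊙_{d+k} s) = (r · a) ⊙_d s. -/
/-! Since `deg r ≤ k`, the coefficient of degree `k + j` of `r · (a ⊙ s)` only involves the
coefficients of `a ⊙ s` of degrees `j, …, k + j`; for `j < d` these lie below `d + k`, so they
are the coefficients of `a · s` of degrees shifted by `n - 1`, and the sum is the coefficient of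
degree `n - 1 + k + j` of `r · (a · s)`. -/

open Polynomial

/-- Middle product: the polynomial with coefficients of `a*b` of degrees `k,...,k+d-1`,
i.e. `⌊(a·b mod x^{k+d}) / x^k⌋`. -/
noncomputable def middleProduct (R : Type*) [CommRing R] (d k : ℕ) (a b : Polynomial R) :
    Polynomial R :=
  ∑ i ∈ Finset.range d, Polynomial.C ((a * b).coeff (k + i)) * Polynomial.X ^ i

section

variable {R : Type*} [CommRing R]

lemma coeff_middleProduct (d k : ℕ) (a b : R[X]) (j : ℕ) :
    (middleProduct R d k a b).coeff j = if j < d then (a * b).coeff (k + j) else 0 := by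
  simp only [middleProduct, finsetSum_coeff, coeff_C_mul_X_pow, Finset.sum_ite_eq,
    Finset.mem_range]

lemma coeff_mul_eq_sum_range_of_natDegree_le {r : R[X]} {k : ℕ} (hr : r.natDegree ≤ k)
    (p : R[X]) {i : ℕ} (hi : k ≤ i) :
    (r * p).coeff i = ∑ u ∈ Finset.range (k + 1), r.coeff u * p.coeff (i - u) := by
  rw [coeff_mul, Finset.Nat.sum_antidiagonal_eq_sum_range_succ_mk]
  refine (Finset.sum_subset (Finset.range_subset_range.mpr (by omega)) fun u _ hu => ?_).symm
  rw [coeff_eq_zero_of_natDegree_lt (by rw [Finset.mem_range] at hu; omega), zero_mul]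

lemma middleProduct_middleProduct {r : R[X]} {d d' k : ℕ} (hr : r.natDegree ≤ k)
    (hd : d + k ≤ d') (m : ℕ) (a s : R[X]) :
    middleProduct R d k r (middleProduct R d' m a s) = middleProduct R d (m + k) (r * a) s := by
  ext j
  simp only [coeff_middleProduct]
  split_ifs with hj
  · rw [mul_assoc, coeff_mul_eq_sum_range_of_natDegree_le hr _ (by omega),
      coeff_mul_eq_sum_range_of_natDegree_le hr _ (by omega)]
    refine Finset.sum_congr rfl fun u hu => ?_
    rw [Finset.mem_range] at hu
    rw [coeff_middleProduct, if_pos (by omega), show m + (k + j - u) = m + k + j - u by omega]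
  · rfl

end

theorem middleProduct_assoc_general (R : Type*) [CommRing R] (d k n : ℕ)
    (hn : 0 < n)
    (r a s : Polynomial R)
    (hr : r.degree < ((k + 1 : ℕ) : WithBot ℕ)) :
    middleProduct R d k r (middleProduct R (d + k) (n - 1) a s)
      = middleProduct R d (n + k - 1) (r * a) s := by
  rw [middleProduct_middleProduct (natDegree_le_iff_degree_le.mpr (Order.le_of_lt_succ hr)) le_rfl,
    Nat.sub_add_comm hn]

/-- `r ⊙_d (a ⊙_{d+k} s) = (r·a) ⊙_d s` for `deg r < k+1`, `deg a < n`,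
`deg s < n+d+k-1`. The inner middle product `a ⊙_{d+k} s` has shift parameter `n-1`,
the outer one has shift `k`, and `(r·a) ⊙_d s` has shift `n+k-1`. -/
theorem middleProduct_assoc (R : Type*) [CommRing R] (d k n : ℕ)
    (hd : 0 < d) (hk : 0 < k) (hn : 0 < n)
    (r a s : Polynomial R)
    (hr : r.degree < ((k + 1 : ℕ) : WithBot ℕ))
    (ha : a.degree < (n : ℕ))
    (hs : s.degree < ((n + d + k - 1 : ℕ) : WithBot ℕ)) :
    middleProduct R d k r (middleProduct R (d + k) (n - 1) a s)
      = middleProduct R d (n + k - 1) (r * a) s :=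
  middleProduct_assoc_general R d k n hn r a s hr
end

section
/- Correctness of decryption under smallness condition: with the notation of the decryption identity, if the polynomial μ + 2(e₀ − Σᵢ rᵢ ⊙_{k+2} eᵢ) has all coefficients of absolute value strictly less than q/2 (when coefficients are taken as integers), and μ has coefficients in {0,1}, then reducing CT₀ − Σᵢ rᵢ ⊙_{k+2} ctᵢ first modulo q (to the centered interval (−q/2, q/2]) and then modulo 2 recovers μ. -/
open Polynomial

theorem Int.bmod_eq_of_modEq_of_two_mul_abs_lt {a b : ℤ} {q : ℕ} (h : a ≡ b [ZMOD q])
    (hb : 2 * |b| < q) : a.bmod q = b := by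
  have hq : 0 < q := by have := abs_nonneg b; omega
  rw [Int.bmod_eq_iff hq]
  refine ⟨?_, ?_, h.dvd⟩ <;> cases abs_cases b <;> omega

theorem decryption_correct_general (q : ℕ)
    (N k : ℕ) (r e ct : Fin N → Polynomial ℤ) (κ : Fin N → ℕ)
    (CT₀ e₀ μ : Polynomial ℤ)
    (hcong : ∀ i : ℕ,
      (CT₀ - ∑ j, middleProduct ℤ (k + 2) (κ j) (r j) (ct j)).coeff i
        ≡ (μ + 2 * (e₀ - ∑ j, middleProduct ℤ (k + 2) (κ j) (r j) (e j))).coeff i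
          [ZMOD (q : ℤ)])
    (hbound : ∀ i : ℕ,
      2 * |(μ + 2 * (e₀ - ∑ j, middleProduct ℤ (k + 2) (κ j) (r j) (e j))).coeff i|
        < (q : ℤ))
    (hμ : ∀ i : ℕ, μ.coeff i = 0 ∨ μ.coeff i = 1) :
    ∀ i : ℕ,
      (Int.bmod ((CT₀ - ∑ j, middleProduct ℤ (k + 2) (κ j) (r j) (ct j)).coeff i) q) % 2
        = μ.coeff i := by
  intro i
  rw [Int.bmod_eq_of_modEq_of_two_mul_abs_lt (hcong i) (hbound i), coeff_add, coeff_ofNat_mul]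
  have := hμ i
  omega

/-- Correctness of decryption: if `CT₀ − Σᵢ rᵢ ⊙_{k+2} ctᵢ ≡ μ + 2·E (mod q)`
coefficientwise (with `E = e₀ − Σᵢ rᵢ ⊙_{k+2} eᵢ`), all coefficients of `μ + 2·E`
are of absolute value `< q/2`, `μ` has `{0,1}` coefficients and `q` is an odd prime,
then centered reduction mod `q` followed by reduction mod `2` recovers `μ`. -/
theorem decryption_correct (q : ℕ) (hq : Nat.Prime q) (hodd : Odd q)
    (N k : ℕ) (r e ct : Fin N → Polynomial ℤ) (κ : Fin N → ℕ)
    (CT₀ e₀ μ : Polynomial ℤ)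
    (hcong : ∀ i : ℕ,
      (CT₀ - ∑ j, middleProduct ℤ (k + 2) (κ j) (r j) (ct j)).coeff i
        ≡ (μ + 2 * (e₀ - ∑ j, middleProduct ℤ (k + 2) (κ j) (r j) (e j))).coeff i
          [ZMOD (q : ℤ)])
    (hbound : ∀ i : ℕ,
      2 * |(μ + 2 * (e₀ - ∑ j, middleProduct ℤ (k + 2) (κ j) (r j) (e j))).coeff i|
        < (q : ℤ))
    (hμ : ∀ i : ℕ, μ.coeff i = 0 ∨ μ.coeff i = 1) :
    ∀ i : ℕ,
      (Int.bmod ((CT₀ - ∑ j, middleProduct ℤ (k + 2) (κ j) (r j) (ct j)).coeff i) q) % 2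
        = μ.coeff i :=
  decryption_correct_general q N k r e ct κ CT₀ e₀ μ hcong hbound hμ
end

section
/- Discrete Gaussian tail bound over Z: for any ε ∈ (0, 1/2), any σ ≥ η_ε(Z) (the smoothing parameter of Z), any center c ∈ ℝ, and any K > 0, a sample x drawn from the discrete Gaussian D_{Z,σ,c} satisfies Pr[|x − c| ≥ K·σ] ≤ 2e^{−πK²} · (1+ε)/(1−ε). -/
/-!
By Poisson summation, `∑ₙ exp (-π (n - d)² / σ²) = σ ∑ₙ exp (-π σ² n²) cos (2π d n)`, so the
smoothing condition puts the Gaussian mass of every shift `ℤ - d` within `σ ε` of `σ`. For the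
tail, `K σ ≤ |u|` gives `u² ≥ K² σ² + (|u| - K σ)²`, so the tail mass around `c` is at most
`exp (-π K²)` times the masses around `c ± K σ`, i.e. at most `2 exp (-π K²) σ (1 + ε)`, against a
total mass of at least `σ (1 - ε)`.
-/

open Real

section

open Complex

theorem summable_exp_neg_mul_sq_sub {a : ℝ} (ha : 0 < a) (d : ℝ) :
    Summable fun n : ℤ => rexp (-π * a * ((n : ℝ) - d) ^ 2) := by
  have hθ : Summable fun n : ℤ => ‖jacobiTheta₂_term n (I * -(a * d)) (I * a)‖ :=
    ((summable_jacobiTheta₂_term_iff _ _).2 (by simpa using ha)).norm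
  refine (hθ.mul_left (rexp (-π * a * d ^ 2))).congr fun n => ?_
  rw [norm_jacobiTheta₂_term, ← Real.exp_add]
  simp only [mul_im, neg_re, mul_re, I_re, I_im, ofReal_re, ofReal_im]
  ring_nf

theorem tsum_exp_neg_sq_sub_div_sq {σ : ℝ} (hσ : 0 < σ) (d : ℝ) :
    ∑' n : ℤ, rexp (-π * ((n : ℝ) - d) ^ 2 / σ ^ 2) =
      σ * ∑' n : ℤ, rexp (-π * σ ^ 2 * (n : ℝ) ^ 2) * Real.cos (2 * π * d * n) := by
  have hσ2 : 0 < σ ^ 2 := by positivity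
  have hexpo (n : ℤ) : -π * ((σ ^ 2 : ℝ) : ℂ) * n ^ 2 + 2 * π * (I * d) * n =
      ((-π * σ ^ 2 * (n : ℝ) ^ 2 : ℝ) : ℂ) + ((2 * π * d * n : ℝ) : ℂ) * I := by
    push_cast; ring
  have hsum : Summable fun n : ℤ => cexp (-π * ((σ ^ 2 : ℝ) : ℂ) * n ^ 2 + 2 * π * (I * d) * n) := by
    refine Summable.of_norm ((summable_exp_neg_mul_sq_sub hσ2 0).congr fun n => ?_)
    rw [hexpo, norm_exp, add_re, ofReal_re, re_ofReal_mul, I_re, mul_zero, add_zero, sub_zero]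
  have hsqrt : ((σ ^ 2 : ℝ) : ℂ) ^ (1 / 2 : ℂ) = σ := by
    rw [← ofReal_ofNat, ← ofReal_one, ← ofReal_div, ← ofReal_cpow hσ2.le, ← sqrt_eq_rpow,
      sqrt_sq hσ.le]
  have hgauss (n : ℤ) : cexp (-π / ((σ ^ 2 : ℝ) : ℂ) * (n + I * (I * d)) ^ 2) =
      (rexp (-π * ((n : ℝ) - d) ^ 2 / σ ^ 2) : ℂ) := by
    rw [ofReal_exp, ← mul_assoc, I_mul_I]; push_cast; ring_nf
  have key := Complex.tsum_exp_neg_quadratic (a := ((σ ^ 2 : ℝ) : ℂ))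
    (by rwa [ofReal_re]) (I * d)
  simp_rw [hsqrt, hgauss, ← ofReal_tsum] at key
  have hσ0 : (σ : ℂ) ≠ 0 := ofReal_ne_zero.2 hσ.ne'
  have := congrArg re (congrArg ((σ : ℂ) * ·) key)
  simp only [one_div, mul_inv_cancel_left₀ hσ0, ofReal_re, re_ofReal_mul] at this
  rw [← this, re_tsum hsum]
  congr 1
  refine tsum_congr fun n => ?_
  rw [hexpo, exp_re, add_re, ofReal_re, re_ofReal_mul, I_re, mul_zero, add_zero, add_im,
    ofReal_im, im_ofReal_mul, I_im, mul_one, zero_add]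

end

theorem abs_tsum_exp_neg_sq_sub_div_sq_sub_le {σ : ℝ} (hσ : 0 < σ) (d : ℝ) :
    |∑' n : ℤ, rexp (-π * ((n : ℝ) - d) ^ 2 / σ ^ 2) - σ| ≤
      σ * ∑' n : ℤ, if n = 0 then 0 else rexp (-π * σ ^ 2 * (n : ℝ) ^ 2) := by
  set g : ℤ → ℝ := fun n => rexp (-π * σ ^ 2 * (n : ℝ) ^ 2) * Real.cos (2 * π * d * n)
  have hs : Summable fun n : ℤ => rexp (-π * σ ^ 2 * (n : ℝ) ^ 2) := by
    simpa using summable_exp_neg_mul_sq_sub (a := σ ^ 2) (by positivity) 0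
  have hg : Summable g := hs.of_norm_bounded fun n => by
    simpa [g, abs_mul] using mul_le_of_le_one_right (exp_pos _).le (abs_cos_le_one _)
  rw [tsum_exp_neg_sq_sub_div_sq hσ, hg.tsum_eq_add_tsum_ite 0, ← mul_sub_one, abs_mul,
    abs_of_pos hσ]
  refine mul_le_mul_of_nonneg_left ?_ hσ.le
  simp only [g, Int.cast_zero, mul_zero, zero_pow two_ne_zero, exp_zero, cos_zero, mul_one,
    add_sub_cancel_left]
  have hs0 : Summable fun n : ℤ => if n = 0 then 0 else rexp (-π * σ ^ 2 * (n : ℝ) ^ 2) := by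
    refine (hs.update 0 0).congr fun n => ?_
    rw [Function.update_apply]
  rw [← Real.norm_eq_abs]
  refine tsum_of_norm_bounded hs0.hasSum fun n => ?_
  split_ifs
  · simp
  · simpa [g, abs_mul] using mul_le_of_le_one_right (exp_pos _).le (abs_cos_le_one _)

theorem exp_neg_sq_div_sq_le_of_le_abs {σ K u : ℝ} (hσ : 0 < σ) (hK : 0 ≤ K)
    (hu : K * σ ≤ |u|) :
    rexp (-π * u ^ 2 / σ ^ 2) ≤ rexp (-π * K ^ 2) *
      (rexp (-π * (u - K * σ) ^ 2 / σ ^ 2) + rexp (-π * (u + K * σ) ^ 2 / σ ^ 2)) := by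
  have hexcess : rexp (-π * u ^ 2 / σ ^ 2) ≤
      rexp (-π * K ^ 2) * rexp (-π * (|u| - K * σ) ^ 2 / σ ^ 2) := by
    rw [← exp_add, exp_le_exp, show -π * K ^ 2 = -π * (K * σ) ^ 2 / σ ^ 2 by field_simp,
      ← add_div, div_le_div_iff_of_pos_right (by positivity), ← sq_abs u]
    nlinarith [pi_pos, mul_nonneg (mul_nonneg hK hσ.le) (sub_nonneg.2 hu)]
  refine hexcess.trans (mul_le_mul_of_nonneg_left ?_ (exp_pos _).le)
  rcases abs_choice u with h | h <;> rw [h]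
  · exact le_add_of_nonneg_right (exp_pos _).le
  · rw [show (-u - K * σ) ^ 2 = (u + K * σ) ^ 2 by ring]
    exact le_add_of_nonneg_left (exp_pos _).le

theorem tsum_gaussian_tail_le {σ K : ℝ} (hσ : 0 < σ) (hK : 0 ≤ K) (c : ℝ) :
    ∑' x : ℤ, (if K * σ ≤ |(x : ℝ) - c| then rexp (-π * ((x : ℝ) - c) ^ 2 / σ ^ 2) else 0) ≤
      rexp (-π * K ^ 2) * (∑' x : ℤ, rexp (-π * ((x : ℝ) - (c + K * σ)) ^ 2 / σ ^ 2) +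
        ∑' x : ℤ, rexp (-π * ((x : ℝ) - (c - K * σ)) ^ 2 / σ ^ 2)) := by
  have hs (d : ℝ) : Summable fun x : ℤ => rexp (-π * ((x : ℝ) - d) ^ 2 / σ ^ 2) :=
    (summable_exp_neg_mul_sq_sub (inv_pos.2 (pow_pos hσ 2)) d).congr fun x => by
      rw [div_eq_mul_inv, mul_right_comm]
  rw [← (hs _).tsum_add (hs _), ← tsum_mul_left]
  refine Summable.tsum_le_tsum (fun x => ?_) ((hs c).of_nonneg_of_le (fun x => ?_) fun x => ?_)
    (((hs _).add (hs _)).mul_left _)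
  all_goals split_ifs with h
  · simpa only [sub_sub, sub_add] using exp_neg_sq_div_sq_le_of_le_abs hσ hK h
  all_goals first | positivity | exact le_rfl

theorem discrete_gaussian_tail_general (ε σ c K : ℝ)
    (hε : ε < 1 / 2) (hσ : 0 < σ) (hK : 0 < K)
    (hsmooth : (∑' x : ℤ, if x = 0 then 0 else Real.exp (-π * σ ^ 2 * (x : ℝ) ^ 2)) ≤ ε) :
    (∑' x : ℤ, if K * σ ≤ |(x : ℝ) - c|
        then Real.exp (-π * ((x : ℝ) - c) ^ 2 / σ ^ 2) else 0)
      / (∑' x : ℤ, Real.exp (-π * ((x : ℝ) - c) ^ 2 / σ ^ 2))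
      ≤ 2 * Real.exp (-π * K ^ 2) * (1 + ε) / (1 - ε) := by
  have hmass (d : ℝ) : |∑' x : ℤ, rexp (-π * ((x : ℝ) - d) ^ 2 / σ ^ 2) - σ| ≤ σ * ε :=
    (abs_tsum_exp_neg_sq_sub_div_sq_sub_le hσ d).trans (mul_le_mul_of_nonneg_left hsmooth hσ.le)
  have hplus := (abs_le.1 (hmass (c + K * σ))).2
  have hminus := (abs_le.1 (hmass (c - K * σ))).2
  have hcenter := (abs_le.1 (hmass c)).1
  have hε0 : 0 ≤ ε := (tsum_nonneg fun x => by split_ifs <;> positivity).trans hsmooth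
  have hε1 : 0 < 1 - ε := by linarith
  calc _ ≤ rexp (-π * K ^ 2) * (2 * σ * (1 + ε)) / (σ * (1 - ε)) := by
        refine div_le_div₀ (by positivity) ((tsum_gaussian_tail_le hσ hK.le c).trans ?_) (by positivity)
          (by linarith)
        exact mul_le_mul_of_nonneg_left (by linarith) (exp_pos _).le
    _ = 2 * rexp (-π * K ^ 2) * (1 + ε) / (1 - ε) := by
        field_simp

/-- Discrete Gaussian tail bound (GPV Lemma 2.9): for `ε ∈ (0,1/2)`, `σ ≥ η_ε(ℤ)`
(expressed by the smoothing condition `ρ_{1/σ}(ℤ∖{0}) ≤ ε`), center `c ∈ ℝ` and `K > 0`,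
the mass that `D_{ℤ,σ,c}` puts on `{x : |x−c| ≥ K·σ}` is at most
`2·e^{−πK²}·(1+ε)/(1−ε)`. -/
theorem discrete_gaussian_tail (ε σ c K : ℝ)
    (hε₀ : 0 < ε) (hε : ε < 1 / 2) (hσ : 0 < σ) (hK : 0 < K)
    (hsmooth : (∑' x : ℤ, if x = 0 then 0 else Real.exp (-π * σ ^ 2 * (x : ℝ) ^ 2)) ≤ ε) :
    (∑' x : ℤ, if K * σ ≤ |(x : ℝ) - c|
        then Real.exp (-π * ((x : ℝ) - c) ^ 2 / σ ^ 2) else 0)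
      / (∑' x : ℤ, Real.exp (-π * ((x : ℝ) - c) ^ 2 / σ ^ 2))
      ≤ 2 * Real.exp (-π * K ^ 2) * (1 + ε) / (1 - ε) :=
  discrete_gaussian_tail_general ε σ c K hε hσ hK hsmooth
end
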